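/- The countable power 𝔸^ω of the double arrow space is not countable dense homogeneous. -/

import Mathlib

/-!
Take a countable dense set `D ⊆ 𝔸^ω` on which the projection `π₀` to the coordinate `0` is
injective (the values `π₀ d` are right points `(x, true)` with `x` running through pairwise disjoint
translates `ℚ + n√2`), and a countable dense `E ⊇ Q`, where `Q` is a countable crowded subset of
a Cantor set `K ⊆ 𝔸^ω`. If a homeomorphism `h` carried `D` onto `E`, then `π₀ ∘ h⁻¹` would be
injective on `Q`, so `π₀ (h⁻¹ Q)` would be crowded and its closure a nonempty perfect compact
subset of `π₀ (h⁻¹ K)`. But in `𝔸` every point has `Ici` or `Iic` open, which makes every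
continuous image of a second countable space countable; and by the Baire category theorem a
nonempty countable compact Hausdorff space has an isolated point.
-/

open Set Topology

def DoubleArrow : Type :=
  {p : ℝ ×ₗ Bool // ((ofLex p).2 = false ∧ (ofLex p).1 ∈ Set.Ioc (0:ℝ) 1) ∨
    ((ofLex p).2 = true ∧ (ofLex p).1 ∈ Set.Ico (0:ℝ) 1)}

noncomputable instance : LinearOrder DoubleArrow := Subtype.instLinearOrder _
noncomputable instance : TopologicalSpace DoubleArrow := Preorder.topology DoubleArrow
instance : OrderTopology DoubleArrow := ⟨rfl⟩

/-- Countable dense homogeneity. -/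
def CDH (X : Type*) [TopologicalSpace X] : Prop :=
  ∀ D E : Set X, D.Countable → Dense D → E.Countable → Dense E →
    ∃ h : X ≃ₜ X, h '' D = E

section

variable {X Y : Type*} [TopologicalSpace X] [TopologicalSpace Y]

theorem countable_range_inter_setOf_isOpen_Ici {α : Type*} [PartialOrder α] [TopologicalSpace α]
    [SecondCountableTopology X] {f : X → α} (hf : Continuous f) :
    (range f ∩ {y | IsOpen (Ici y)}).Countable := by
  obtain ⟨b, hbc, -, hb⟩ := TopologicalSpace.exists_countable_basis X
  have key : ∀ y ∈ range f ∩ {y | IsOpen (Ici y)},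
      ∃ B ∈ b, (∃ x ∈ B, f x = y) ∧ B ⊆ f ⁻¹' Ici y := by
    rintro _ ⟨⟨x, rfl⟩, hopen⟩
    obtain ⟨B, hBb, hxB, hBsub⟩ :=
      hb.exists_subset_of_mem_open (mem_preimage.2 self_mem_Ici) (hopen.preimage hf)
    exact ⟨B, hBb, ⟨x, hxB, rfl⟩, hBsub⟩
  choose! B hBb hB hBsub using key
  -- `y` is the minimum of `f` on `B y`, so `B` is injective
  refine MapsTo.countable_of_injOn hBb (fun y hy z hz hyz => ?_) hbc
  obtain ⟨x, hx, rfl⟩ := hB y hy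
  obtain ⟨x', hx', rfl⟩ := hB z hz
  exact le_antisymm (hBsub _ hy (hyz.symm ▸ hx')) (hBsub _ hz (hyz ▸ hx))

theorem countable_range_inter_setOf_isOpen_Iic {α : Type*} [PartialOrder α] [TopologicalSpace α]
    [SecondCountableTopology X] {f : X → α} (hf : Continuous f) :
    (range f ∩ {y | IsOpen (Iic y)}).Countable :=
  countable_range_inter_setOf_isOpen_Ici (α := αᵒᵈ) (f := OrderDual.toDual ∘ f) hf

theorem Preperfect.image_of_injOn {f : X → Y} (hf : Continuous f) {A : Set X} (hA : Preperfect A)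
    (hinj : InjOn f A) : Preperfect (f '' A) := by
  rintro _ ⟨x, hx, rfl⟩
  rw [accPt_iff_nhds]
  intro U hU
  obtain ⟨y, ⟨hyU, hyA⟩, hyx⟩ := accPt_iff_nhds.1 (hA x hx) _ (hf.continuousAt hU)
  exact ⟨f y, ⟨hyU, mem_image_of_mem f hyA⟩, fun h => hyx (hinj hyA hx h)⟩

theorem Dense.preperfect [T1Space X] [PerfectSpace X] {s : Set X} (hs : Dense s) :
    Preperfect s := fun x _ =>
  accPt_iff_nhds.2 fun _ hU =>
    let ⟨y, ⟨hys, hyx⟩, hyU⟩ := (hs.sdiff_singleton x).inter_nhds_nonempty hU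
    ⟨y, ⟨hyU, hys⟩, hyx⟩

theorem Perfect.not_countable_of_isCompact [T2Space X] {C : Set X} (hC : Perfect C)
    (hK : IsCompact C) (hne : C.Nonempty) : ¬C.Countable := by
  intro hcount
  have := isCompact_iff_compactSpace.1 hK
  have := hcount.to_subtype
  have := hne.to_subtype
  -- Baire category theorem in the compact Hausdorff space `C`, the union of its singletons
  obtain ⟨c, d, hd⟩ := nonempty_interior_of_iUnion_of_closed (fun c : C => isClosed_singleton)
    (iUnion_of_singleton C)
  rw [mem_singleton_iff.1 (interior_subset hd)] at hd
  obtain ⟨U, hU, hUc⟩ := (mem_nhds_subtype C c _).1 (mem_interior_iff_mem_nhds.1 hd)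
  obtain ⟨y, ⟨hyU, hyC⟩, hyc⟩ := accPt_iff_nhds.1 (hC.acc c c.2) U hU
  exact hyc (congrArg Subtype.val (hUc (show ⟨y, hyC⟩ ∈ Subtype.val ⁻¹' U from hyU)))

theorem Preperfect.not_countable_image_of_injOn [T2Space Y] {f : X → Y} (hf : Continuous f)
    {A K : Set X} (hA : Preperfect A) (hne : A.Nonempty) (hinj : InjOn f A) (hK : IsCompact K)
    (hAK : A ⊆ K) : ¬(f '' K).Countable := by
  intro hcount
  have hfK : IsCompact (f '' K) := hK.image hf
  have hsub : closure (f '' A) ⊆ f '' K := closure_minimal (image_mono hAK) hfK.isClosed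
  exact (hA.image_of_injOn hf hinj).perfect_closure.not_countable_of_isCompact
    (hfK.of_isClosed_subset isClosed_closure hsub) ((hne.image f).mono subset_closure)
    (hcount.mono hsub)

end

instance Pi.perfectSpace {ι : Type*} [Infinite ι] {X : ι → Type*} [∀ i, TopologicalSpace (X i)]
    [∀ i, Nontrivial (X i)] : PerfectSpace (∀ i, X i) := by
  classical
  refine perfectSpace_iff_forall_not_isolated.2 fun x => mem_closure_iff_nhdsWithin_neBot.1 ?_
  choose y hy using fun i => exists_ne (x i)
  refine mem_closure_of_tendsto (f := fun i => Function.update x i (y i)) (b := Filter.cofinite)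
    (tendsto_pi_nhds.2 fun j => tendsto_const_nhds.congr' ?_)
    (Filter.Eventually.of_forall fun i h => ?_)
  · filter_upwards [Filter.eventually_cofinite_ne j] with i hij
    rw [Function.update_of_ne hij.symm]
  · exact hy i (by simpa using congrFun h i)

theorem exists_countable_preperfect_subset_range_cantor (Y : Type*) [TopologicalSpace Y]
    [Nontrivial Y] : ∃ g : (ℕ → Bool) → ℕ → Y, Continuous g ∧
      ∃ Q ⊆ range g, Q.Countable ∧ Q.Nonempty ∧ Preperfect Q := by
  obtain ⟨a, b, hab⟩ := exists_pair_ne Y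
  let ι (x : Bool) : Y := if x then a else b
  have hι : Function.Injective ι := by
    intro x y
    cases x <;> cases y <;> simp [ι, hab, hab.symm]
  have hg : Continuous (ι ∘ · : (ℕ → Bool) → ℕ → Y) :=
    continuous_pi fun n => continuous_of_discreteTopology.comp (continuous_apply n)
  obtain ⟨S, hSc, hSd⟩ := TopologicalSpace.exists_countable_dense (ℕ → Bool)
  exact ⟨_, hg, _, image_subset_range _ S, hSc.image _, hSd.nonempty.image _,
    hSd.preperfect.image_of_injOn hg hι.comp_left.injOn⟩

theorem dense_iUnion_update_image {ι κ : Type*} [DecidableEq ι] {X : ι → Type*}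
    [∀ i, TopologicalSpace (X i)] {e : κ → ∀ i, X i} (he : DenseRange e) (i : ι)
    {T : κ → Set (X i)} (hT : ∀ k, Dense (T k)) :
    Dense (⋃ k, Function.update (e k) i '' T k) := by
  refine dense_iff_inter_open.2 fun U hU ⟨z, hzU⟩ => ?_
  have hcont : Continuous fun p : X i × (∀ j, X j) => Function.update p.2 i p.1 :=
    continuous_snd.update i continuous_fst
  obtain ⟨V, W, hV, hW, hzV, hzW, hVW⟩ :=
    isOpen_prod_iff.1 (hU.preimage hcont) (z i) z (by simpa using hzU)
  obtain ⟨k, hk⟩ := he.exists_mem_open hW ⟨z, hzW⟩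
  obtain ⟨y, hyV, hyT⟩ := (hT k).inter_open_nonempty V hV ⟨z i, hzV⟩
  exact ⟨_, hVW (mk_mem_prod hyV hk), mem_iUnion.2 ⟨k, y, hyT, rfl⟩⟩

theorem denseRange_ratCast_add (c : ℝ) : DenseRange fun q : ℚ => (q : ℝ) + c :=
  (Homeomorph.addRight c).surjective.denseRange.comp Rat.denseRange_cast
    (Homeomorph.addRight c).continuous

theorem Irrational.eq_of_ratCast_add_mul_eq {α : ℝ} (hα : Irrational α) {q r : ℚ} {m n : ℕ}
    (h : q + m * α = r + n * α) : m = n := by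
  by_contra hmn
  have hne : ((m : ℤ) - n) ≠ 0 := sub_ne_zero.2 (by exact_mod_cast hmn)
  apply (hα.intCast_mul hne).ne_rat (r - q)
  push_cast
  linarith

namespace DoubleArrow

def right (t : Ico (0:ℝ) 1) : DoubleArrow := ⟨toLex (t, true), Or.inr ⟨rfl, t.2⟩⟩

def left (u : Ioc (0:ℝ) 1) : DoubleArrow := ⟨toLex (u, false), Or.inl ⟨rfl, u.2⟩⟩

def fst (p : DoubleArrow) : ℝ := (ofLex p.1).1

@[elab_as_elim]
theorem ind {P : DoubleArrow → Prop} (right : ∀ t, P (right t)) (left : ∀ u, P (left u))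
    (p : DoubleArrow) : P p := by
  obtain ⟨⟨x, _ | _⟩, ⟨hb, hx⟩ | ⟨hb, hx⟩⟩ := p
  · exact left ⟨x, hx⟩
  · nomatch hb
  · nomatch hb
  · exact right ⟨x, hx⟩

variable {s t : Ico (0:ℝ) 1} {u v : Ioc (0:ℝ) 1}

@[simp] theorem fst_right : (right t).fst = t := rfl
@[simp] theorem fst_left : (left u).fst = u := rfl

@[simp] theorem right_lt_right : right s < right t ↔ (s : ℝ) < t := by
  change toLex ((s : ℝ), true) < toLex ((t : ℝ), true) ↔ _
  simp [Prod.Lex.toLex_lt_toLex]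

@[simp] theorem left_lt_left : left u < left v ↔ (u : ℝ) < v := by
  change toLex ((u : ℝ), false) < toLex ((v : ℝ), false) ↔ _
  simp [Prod.Lex.toLex_lt_toLex]

@[simp] theorem left_lt_right : left u < right t ↔ (u : ℝ) ≤ t := by
  change toLex ((u : ℝ), false) < toLex ((t : ℝ), true) ↔ _
  simp [Prod.Lex.toLex_lt_toLex, le_iff_lt_or_eq]

@[simp] theorem right_lt_left : right t < left u ↔ (t : ℝ) < u := by
  change toLex ((t : ℝ), true) < toLex ((u : ℝ), false) ↔ _
  simp [Prod.Lex.toLex_lt_toLex]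

@[simp] theorem right_le_right : right s ≤ right t ↔ (s : ℝ) ≤ t := by
  rw [← not_lt, right_lt_right, not_lt]

@[simp] theorem left_le_left : left u ≤ left v ↔ (u : ℝ) ≤ v := by
  rw [← not_lt, left_lt_left, not_lt]

@[simp] theorem right_le_left : right t ≤ left u ↔ (t : ℝ) < u := by
  rw [← not_lt, left_lt_right, not_le]

theorem right_injective : Function.Injective right := fun _ _ h =>
  Subtype.ext <| le_antisymm (right_le_right.1 h.le) (right_le_right.1 h.ge)

theorem fst_nonneg (p : DoubleArrow) : 0 ≤ p.fst := by
  induction p using ind with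
  | right t => exact t.2.1
  | left u => exact u.2.1.le

theorem fst_le_one (p : DoubleArrow) : p.fst ≤ 1 := by
  induction p using ind with
  | right t => exact t.2.2.le
  | left u => exact u.2.2

theorem right_lt_iff {p : DoubleArrow} : right t < p ↔ (t : ℝ) < p.fst := by
  induction p using ind <;> simp

theorem lt_left_iff {p : DoubleArrow} : p < left u ↔ p.fst < u := by
  induction p using ind <;> simp

theorem lt_right_of_fst_lt {p : DoubleArrow} (h : p.fst < t) : p < right t := by
  induction p using ind with
  | right s => simpa using h
  | left v => simpa using h.le

theorem isBot_right (ht : (t : ℝ) = 0) : IsBot (right t) := fun p => by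
  induction p using ind with
  | right s => simpa [ht] using s.2.1
  | left v => simpa [ht] using v.2.1

theorem isTop_left (hu : (u : ℝ) = 1) : IsTop (left u) := fun p => by
  induction p using ind with
  | right s => simpa [hu] using s.2.2
  | left v => simpa [hu] using v.2.2

theorem left_covBy_right (h : (u : ℝ) = t) : left u ⋖ right t := by
  refine ⟨left_lt_right.2 h.le, fun p hup hpt => ?_⟩
  induction p using ind with
  | right s => exact (right_lt_right.1 hpt).not_ge (h ▸ left_lt_right.1 hup)
  | left v => exact (left_lt_left.1 hup).not_ge (h ▸ left_lt_right.1 hpt)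

theorem isOpen_Ici_or_isOpen_Iic (p : DoubleArrow) : IsOpen (Ici p) ∨ IsOpen (Iic p) := by
  induction p using ind with
  | right t =>
    refine .inl ?_
    rcases t.2.1.eq_or_lt with h0 | h0
    · exact (isBot_right h0.symm).Ici_eq ▸ isOpen_univ
    · exact (left_covBy_right (u := ⟨t, h0, t.2.2.le⟩) rfl).Ioi_eq ▸ isOpen_Ioi
  | left u =>
    refine .inr ?_
    rcases u.2.2.eq_or_lt with h1 | h1
    · exact (isTop_left h1).Iic_eq ▸ isOpen_univ
    · exact (left_covBy_right (t := ⟨u, u.2.1.le, h1⟩) rfl).Iio_eq ▸ isOpen_Iio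

theorem countable_range_of_continuous {X : Type*} [TopologicalSpace X] [SecondCountableTopology X]
    {f : X → DoubleArrow} (hf : Continuous f) : (range f).Countable :=
  ((countable_range_inter_setOf_isOpen_Ici hf).union
    (countable_range_inter_setOf_isOpen_Iic hf)).mono
    fun y hy => (isOpen_Ici_or_isOpen_Iic y).imp (⟨hy, ·⟩) (⟨hy, ·⟩)

theorem dense_right_image {S : Set ℝ} (hS : Dense S) : Dense (right '' (Subtype.val ⁻¹' S)) := by
  intro p
  rw [mem_closure_iff_nhds]
  intro U hU
  induction p using ind with
  | right t =>
    obtain ⟨q, htq, hsub⟩ :=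
      exists_Ico_subset_of_mem_nhds hU ⟨left ⟨1, one_pos, le_rfl⟩, by simpa using t.2.2⟩
    obtain ⟨s, hsS, hts, hsq⟩ := hS.exists_between (right_lt_iff.1 htq)
    let s' : Ico (0:ℝ) 1 := ⟨s, t.2.1.trans hts.le, hsq.trans_le q.fst_le_one⟩
    exact ⟨right s', hsub ⟨right_le_right.2 hts.le, right_lt_iff.2 hsq⟩, s', hsS, rfl⟩
  | left u =>
    obtain ⟨q, hqu, hsub⟩ :=
      exists_Ioc_subset_of_mem_nhds hU ⟨right ⟨0, le_rfl, one_pos⟩, by simpa using u.2.1⟩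
    obtain ⟨s, hsS, hqs, hsu⟩ := hS.exists_between (lt_left_iff.1 hqu)
    let s' : Ico (0:ℝ) 1 := ⟨s, q.fst_nonneg.trans hqs.le, hsu.trans_le u.2.2⟩
    exact ⟨right s', hsub ⟨lt_right_of_fst_lt hqs, right_le_left.2 hsu⟩, s', hsS, rfl⟩

instance : Nontrivial DoubleArrow :=
  ⟨⟨right ⟨0, le_rfl, one_pos⟩, left ⟨1, one_pos, le_rfl⟩, (right_lt_left.2 one_pos).ne⟩⟩

instance : TopologicalSpace.SeparableSpace DoubleArrow :=
  ⟨⟨_, ((countable_range _).preimage Subtype.val_injective).image right,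
    dense_right_image Rat.denseRange_cast⟩⟩

theorem exists_countable_dense_injOn_eval_zero :
    ∃ D : Set (ℕ → DoubleArrow), D.Countable ∧ Dense D ∧ InjOn (fun x => x 0) D := by
  obtain ⟨e, he⟩ := TopologicalSpace.exists_dense_seq (ℕ → DoubleArrow)
  -- the `n`-th batch takes its values at `0` from `ℚ + n√2`; distinct batches never share one
  let T (n : ℕ) : Set DoubleArrow :=
    right '' (Subtype.val ⁻¹' range fun q : ℚ => (q : ℝ) + n * √2)
  refine ⟨⋃ n, Function.update (e n) 0 '' T n, countable_iUnion fun n =>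
      (((countable_range _).preimage Subtype.val_injective).image _).image _,
    dense_iUnion_update_image he 0 fun n => dense_right_image (denseRange_ratCast_add _), ?_⟩
  simp only [InjOn, mem_iUnion, mem_image, mem_preimage, mem_range, T]
  rintro _ ⟨m, _, ⟨s, ⟨q, hq⟩, rfl⟩, rfl⟩ _ ⟨n, _, ⟨t, ⟨r, hr⟩, rfl⟩, rfl⟩ h
  simp only [Function.update_self] at h
  obtain rfl := right_injective h
  obtain rfl := irrational_sqrt_two.eq_of_ratCast_add_mul_eq (hq.trans hr.symm)
  rfl

end DoubleArrow

theorem doubleArrow_power_not_CDH : ¬ CDH (ℕ → DoubleArrow) := by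
  intro hCDH
  obtain ⟨D, hDc, hDd, hDinj⟩ := DoubleArrow.exists_countable_dense_injOn_eval_zero
  obtain ⟨g, hg, Q, hQg, hQc, hQne, hQ⟩ :=
    exists_countable_preperfect_subset_range_cantor DoubleArrow
  obtain ⟨h, hhD⟩ := hCDH D (D ∪ Q) hDc hDd (hDc.union hQc) (hDd.mono subset_union_left)
  have hQD : MapsTo h.symm Q D := fun x hx => by
    obtain ⟨d, hd, rfl⟩ : x ∈ h '' D := hhD ▸ subset_union_right hx
    simpa using hd
  refine hQ.not_countable_image_of_injOn (f := fun x => h.symm x 0) (by fun_prop) hQne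
    (hDinj.comp h.symm.injective.injOn hQD) (isCompact_range hg) hQg ?_
  rw [← range_comp]
  exact DoubleArrow.countable_range_of_continuous (by fun_prop)
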